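/- Let N, M, q be positive integers with q^M ≡ 1 (mod N), and let G = C_N ⋊ C_M be the semidirect product generated by σ of order N and φ of order M with relation φσφ⁻¹ = σ^q. Let f be a positive even divisor of M and let H ≤ G be a subgroup contained in ⟨σ⟩·⟨φ^f⟩. If x = σ^i φ^j ∈ G satisfies HxH = Hx⁻¹H, then j ≡ 0 (mod f) or 2j ≡ f (mod 2f) would force j ≡ f/2 (mod f); that is, j mod f ∈ {0, f/2}. -/

import Mathlib

/-!
The exponent of `φ` in a normal form `σ^i φ^j` is well defined mod `M`, hence mod `f`, and adds up
under multiplication since the relation lets `σ` be moved past `φ`; on `H` it vanishes mod `f`.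
If `x⁻¹ = h₁ x h₂` with `h₁, h₂ ∈ H`, then `x` and `x⁻¹` have the same
exponent mod `f`, i.e. `2j ≡ 0 (mod f)`, which leaves only `j ≡ 0` and `j ≡ f/2`.
-/

theorem Nat.mod_eq_zero_or_eq_half_of_dvd_two_mul {f j : ℕ} (hf : 0 < f) (hfeven : Even f)
    (h : f ∣ 2 * j) : j % f = 0 ∨ j % f = f / 2 := by
  have hmod : f ∣ 2 * (j % f) := by
    have hsplit : 2 * j = 2 * (j % f) + f * (2 * (j / f)) := by
      have := Nat.mod_add_div j f
      linarith
    rw [hsplit] at h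
    exact (Nat.dvd_add_left (dvd_mul_right f _)).mp h
  obtain ⟨k, hk⟩ := hmod
  have hk2 : k < 2 := by nlinarith [Nat.mod_lt j hf]
  obtain ⟨m, hm⟩ := hfeven
  interval_cases k <;> omega

section NormalForm

variable {G : Type*} [Group G] {σ φ : G} {q : ℕ}

theorem pow_mul_pow_eq_of_mul_mul_inv_eq (hrel : φ * σ * φ⁻¹ = σ ^ q) (k m : ℕ) :
    φ ^ k * σ ^ m = σ ^ (m * q ^ k) * φ ^ k := by
  have hcomm : ∀ m : ℕ, φ * σ ^ m = σ ^ (m * q) * φ := fun m => by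
    rw [mul_comm, pow_mul, ← hrel, conj_pow, inv_mul_cancel_right]
  induction k generalizing m with
  | zero => simp
  | succ k ih =>
    rw [pow_succ', mul_assoc, ih, ← mul_assoc, hcomm, mul_assoc, ← pow_succ', mul_assoc m,
      ← pow_succ]

theorem normalForm_mul_normalForm (hrel : φ * σ * φ⁻¹ = σ ^ q) (a b c d : ℕ) :
    σ ^ a * φ ^ b * (σ ^ c * φ ^ d) = σ ^ (a + c * q ^ b) * φ ^ (b + d) := by
  rw [mul_assoc, ← mul_assoc (φ ^ b), pow_mul_pow_eq_of_mul_mul_inv_eq hrel, pow_add, pow_add]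
  group

variable (σ φ) in
def HasPhiExponent (x : G) (j : ℕ) : Prop :=
  ∃ i : ℕ, x = σ ^ i * φ ^ j

theorem hasPhiExponent_one : HasPhiExponent σ φ 1 0 :=
  ⟨0, by simp⟩

theorem HasPhiExponent.mul (hrel : φ * σ * φ⁻¹ = σ ^ q) {x y : G} {j k : ℕ}
    (hx : HasPhiExponent σ φ x j) (hy : HasPhiExponent σ φ y k) :
    HasPhiExponent σ φ (x * y) (j + k) := by
  obtain ⟨a, rfl⟩ := hx
  obtain ⟨c, rfl⟩ := hy
  exact ⟨_, normalForm_mul_normalForm hrel a j c k⟩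

theorem HasPhiExponent.modEq {M : ℕ}
    (hnf : ∀ i j i' j' : ℕ, σ ^ i * φ ^ j = σ ^ i' * φ ^ j' → j ≡ j' [MOD M]) {x : G} {j k : ℕ}
    (hj : HasPhiExponent σ φ x j) (hk : HasPhiExponent σ φ x k) : j ≡ k [MOD M] := by
  obtain ⟨a, rfl⟩ := hj
  obtain ⟨c, hc⟩ := hk
  exact hnf _ _ _ _ hc

end NormalForm

theorem stmt18_general (M q f : ℕ)
    (hf : 0 < f) (hfM : f ∣ M) (hfeven : Even f)
    {G : Type*} [Group G] (σ φ : G)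
    (hrel : φ * σ * φ⁻¹ = σ ^ q)
    (hgen : ∀ x : G, ∃ i j : ℕ, x = σ ^ i * φ ^ j)
    (hnf : ∀ i j i' j' : ℕ, σ ^ i * φ ^ j = σ ^ i' * φ ^ j' → j ≡ j' [MOD M])
    (H : Subgroup G) (hH : ∀ x ∈ H, ∃ i j : ℕ, x = σ ^ i * φ ^ (f * j)) :
    ∀ i j : ℕ,
      DoubleCoset.doubleCoset (σ ^ i * φ ^ j) (H : Set G) (H : Set G) =
        DoubleCoset.doubleCoset (σ ^ i * φ ^ j)⁻¹ (H : Set G) (H : Set G) →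
      j % f = 0 ∨ j % f = f / 2 := by
  intro i j hsym
  have hxj : HasPhiExponent σ φ (σ ^ i * φ ^ j) j := ⟨i, rfl⟩
  have hmem : (σ ^ i * φ ^ j)⁻¹ ∈ DoubleCoset.doubleCoset (σ ^ i * φ ^ j) (H : Set G) H :=
    hsym ▸ DoubleCoset.mem_doubleCoset_self H H _
  obtain ⟨h₁, hh₁, h₂, hh₂, hinv⟩ := DoubleCoset.mem_doubleCoset.mp hmem
  obtain ⟨a, b, hb⟩ := hH h₁ hh₁
  obtain ⟨c, d, hd⟩ := hH h₂ hh₂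
  obtain ⟨i', j', hinvj'⟩ := hgen (σ ^ i * φ ^ j)⁻¹
  have hsum : j + j' ≡ 0 [MOD M] :=
    (hxj.mul hrel ⟨i', hinvj'⟩).modEq hnf (by simpa using hasPhiExponent_one)
  have hconj : j' ≡ f * b + j + f * d [MOD M] :=
    HasPhiExponent.modEq hnf ⟨i', hinvj'⟩
      (hinv ▸ (HasPhiExponent.mul hrel (HasPhiExponent.mul hrel ⟨a, hb⟩ hxj) ⟨c, hd⟩))
  have hdvd : f ∣ 2 * j + f * (b + d) := by
    rw [← Nat.modEq_zero_iff_dvd]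
    convert (((Nat.ModEq.refl j).add hconj).symm.trans hsum).of_dvd hfM using 1
    ring
  exact Nat.mod_eq_zero_or_eq_half_of_dvd_two_mul hf hfeven
    ((Nat.dvd_add_left (dvd_mul_right f _)).mp hdvd)

/-- In a semidirect product `G = ⟨σ⟩ ⋊ ⟨φ⟩` with `σ` of order `N`, `φ` of order `M`,
`φσφ⁻¹ = σ^q` (`q^M ≡ 1 mod N`), with normal form `σ^i φ^j` (the `φ`-part well defined
mod `M`), and `H ≤ G` contained in `⟨σ⟩·⟨φ^f⟩` for an even divisor `f` of `M`:
if `H(σ^iφ^j)H = H(σ^iφ^j)⁻¹H` then `j mod f ∈ {0, f/2}`. -/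
theorem stmt18 (N M q f : ℕ) (hN : 0 < N) (hM : 0 < M) (hq : q ^ M ≡ 1 [MOD N])
    (hf : 0 < f) (hfM : f ∣ M) (hfeven : Even f)
    {G : Type*} [Group G] (σ φ : G)
    (hσ : orderOf σ = N) (hφ : orderOf φ = M)
    (hrel : φ * σ * φ⁻¹ = σ ^ q)
    (hgen : ∀ x : G, ∃ i j : ℕ, x = σ ^ i * φ ^ j)
    (hnf : ∀ i j i' j' : ℕ, σ ^ i * φ ^ j = σ ^ i' * φ ^ j' → j ≡ j' [MOD M])
    (H : Subgroup G) (hH : ∀ x ∈ H, ∃ i j : ℕ, x = σ ^ i * φ ^ (f * j)) :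
    ∀ i j : ℕ,
      DoubleCoset.doubleCoset (σ ^ i * φ ^ j) (H : Set G) (H : Set G) =
        DoubleCoset.doubleCoset (σ ^ i * φ ^ j)⁻¹ (H : Set G) (H : Set G) →
      j % f = 0 ∨ j % f = f / 2 :=
  stmt18_general M q f hf hfM hfeven σ φ hrel hgen hnf H hH
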